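/- If performing a single 2-3 move or a single 3-2 move on a triangulation produces a degree one edge, then that edge had degree two before the move; in particular, no single 2-3 or 3-2 move can convert an edge of degree greater than two into a degree one edge. -/

import Mathlib

/-!
Formalization framework for triangulations of three-manifolds
(Matveev/Piergallini-style triangulations, following Wheeler,
"Connectivity of triangulations without degree one edges under 2-3 and 3-2 moves").

A triangulation is a finite family of oriented model tetrahedra together with
orientation-reversing face pairings; no face is glued to itself, faces may be left
unglued (boundary faces).  The face of a model tetrahedron opposite vertex `i` is
labelled `i`; a pairing of face `(t, i)` with face `(t', i')` is recorded together
with the induced simplicial vertex correspondence, extended to a permutation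
`σ` of `Fin 4` with `σ i = i'`.  Since all model tetrahedra are identically
oriented, a face pairing is orientation-reversing exactly when `σ` is odd.
-/

namespace Paper

open Equiv

structure Tri : Type 1 where
  ι : Type
  fin : Fintype ι
  dec : DecidableEq ι
  glue : ι × Fin 4 → Option ((ι × Fin 4) × Perm (Fin 4))
  glue_ne : ∀ F P, glue F = some P → P.1 ≠ F
  glue_symm : ∀ F F' σ, glue F = some (F', σ) → glue F' = some (F, σ⁻¹)
  glue_vertex : ∀ F F' σ, glue F = some (F', σ) → σ F.2 = F'.2
  glue_orient : ∀ F F' σ, glue F = some (F', σ) → Perm.sign σ = -1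

attribute [instance] Tri.fin Tri.dec

/-- Every face is paired with another face (the complex has no boundary). -/
def Tri.Boundaryless (T : Tri) : Prop := ∀ F, T.glue F ≠ none

/-- An unordered pair of distinct vertex labels of a model tetrahedron. -/
def EdgePair : Type := {s : Finset (Fin 4) // s.card = 2}

def epair (a b : Fin 4) (h : a ≠ b) : EdgePair := ⟨{a, b}, Finset.card_pair h⟩

def EdgePair.map (s : EdgePair) (π : Perm (Fin 4)) : EdgePair :=
  ⟨s.1.image π, by rw [Finset.card_image_of_injective _ π.injective, s.2]⟩

/-- A model edge: a model tetrahedron together with a pair of its vertices. -/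
def Tri.ModelEdge (T : Tri) : Type := T.ι × EdgePair

/-- Two model edges are identified across a single face pairing. -/
def Tri.edgeAdj (T : Tri) : T.ModelEdge → T.ModelEdge → Prop := fun e f =>
  ∃ (i : Fin 4) (G : T.ι × Fin 4) (σ : Perm (Fin 4)),
    i ∉ e.2.1 ∧ T.glue (e.1, i) = some (G, σ) ∧ f.1 = G.1 ∧ f.2.1 = e.2.1.image σ

/-- Edges of the triangulation: classes of model edges under the identifications. -/
def Tri.EdgeClass (T : Tri) : Type := Quot T.edgeAdj

def Tri.edgeOf (T : Tri) (e : T.ModelEdge) : T.EdgeClass := Quot.mk _ e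

/-- The degree of an edge of the triangulation: the number of model edges
identified to form it. -/
noncomputable def Tri.degree (T : Tri) (E : T.EdgeClass) : ℕ :=
  Nat.card {e : T.ModelEdge // T.edgeOf e = E}

def Tri.HasDegOneEdge (T : Tri) : Prop := ∃ e : T.ModelEdge, T.degree (T.edgeOf e) = 1

/-- An edge lying in an unglued (boundary) face. -/
def Tri.IsBoundaryEdge (T : Tri) (E : T.EdgeClass) : Prop :=
  ∃ (f : T.ModelEdge) (i : Fin 4), T.edgeOf f = E ∧ i ∉ f.2.1 ∧ T.glue (f.1, i) = none

/-- Identification of model vertices across a single face pairing. -/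
def Tri.vertAdj (T : Tri) : T.ι × Fin 4 → T.ι × Fin 4 → Prop := fun v w =>
  ∃ (i : Fin 4) (G : T.ι × Fin 4) (σ : Perm (Fin 4)),
    i ≠ v.2 ∧ T.glue (v.1, i) = some (G, σ) ∧ w = (G.1, σ v.2)

def Tri.VertClass (T : Tri) : Type := Quot T.vertAdj

noncomputable def Tri.vertexCount (T : Tri) : ℕ := Nat.card T.VertClass

/-! ### The underlying topological space -/

instance (T : Tri) : TopologicalSpace T.ι := ⊥

def Tri.Pt (T : Tri) : Type := T.ι × (stdSimplex ℝ (Fin 4))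

instance (T : Tri) : TopologicalSpace T.Pt :=
  inferInstanceAs (TopologicalSpace (T.ι × (stdSimplex ℝ (Fin 4))))

/-- Identification of points of the disjoint union of the model tetrahedra
(in barycentric coordinates) induced by a face pairing. -/
def Tri.spaceRel (T : Tri) : T.Pt → T.Pt → Prop := fun p q =>
  ∃ (i : Fin 4) (G : T.ι × Fin 4) (σ : Perm (Fin 4)),
    T.glue (p.1, i) = some (G, σ) ∧ (p.2 : Fin 4 → ℝ) i = 0 ∧
    q.1 = G.1 ∧ (q.2 : Fin 4 → ℝ) = (p.2 : Fin 4 → ℝ) ∘ ⇑σ.symm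

/-- The underlying space of the triangulation. -/
def Tri.Space (T : Tri) : Type := Quot T.spaceRel

instance (T : Tri) : TopologicalSpace T.Space :=
  inferInstanceAs (TopologicalSpace (Quot T.spaceRel))

def vpoint (v : Fin 4) : stdSimplex ℝ (Fin 4) :=
  ⟨fun j => if j = v then 1 else 0, by
    refine ⟨fun j => ?_, by simp⟩
    dsimp only; split <;> norm_num⟩

def Tri.IsVertexPoint (T : Tri) (x : T.Space) : Prop :=
  ∃ (t : T.ι) (v : Fin 4), x = Quot.mk _ (t, vpoint v)

/-- The underlying space of the associated ideal triangulation: the space with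
the vertices removed. -/
def Tri.IdealSpace (T : Tri) : Type := {x : T.Space // ¬ T.IsVertexPoint x}

instance (T : Tri) : TopologicalSpace T.IdealSpace :=
  inferInstanceAs (TopologicalSpace {x : T.Space // ¬ T.IsVertexPoint x})

/-- The link of a vertex of the triangulation, realized as the union of the
cross-section triangles at barycentric height `3/4` towards that vertex. -/
def Tri.link (T : Tri) (V : T.VertClass) : Set T.Space :=
  {x | ∃ (t : T.ι) (v : Fin 4) (p : stdSimplex ℝ (Fin 4)),
      Quot.mk T.vertAdj (t, v) = V ∧ (p : Fin 4 → ℝ) v = 3/4 ∧ x = Quot.mk _ (t, p)}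

noncomputable def Sphere2 : Type := Metric.sphere (0 : EuclideanSpace ℝ (Fin 3)) 1

noncomputable instance : TopologicalSpace Sphere2 :=
  inferInstanceAs (TopologicalSpace (Metric.sphere (0 : EuclideanSpace ℝ (Fin 3)) 1))

def Tri.HasSphericalLink (T : Tri) (V : T.VertClass) : Prop :=
  Nonempty (T.link V ≃ₜ Sphere2)

/-! ### Canonical permutations -/

def p23 : Perm (Fin 4) := Equiv.swap 2 3
def p01 : Perm (Fin 4) := Equiv.swap 0 1
/-- the `3`-cycle `(1 3 2)` -/
def c132 : Perm (Fin 4) := Equiv.swap 1 3 * Equiv.swap 3 2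
/-- the `3`-cycle `(1 2 3)` -/
def c123 : Perm (Fin 4) := Equiv.swap 1 2 * Equiv.swap 2 3
/-- the permutation `(0 1)(2 3)` -/
def c01x23 : Perm (Fin 4) := Equiv.swap 0 1 * Equiv.swap 2 3
/-- the `3`-cycle `(0 1 2)` -/
def c012 : Perm (Fin 4) := Equiv.swap 0 1 * Equiv.swap 1 2
/-- the `3`-cycle `(0 1 3)` -/
def c013 : Perm (Fin 4) := Equiv.swap 0 1 * Equiv.swap 1 3
/-- the `4`-cycle `(0 3 1 2)` -/
def aV : Perm (Fin 4) := Equiv.swap 0 3 * Equiv.swap 3 1 * Equiv.swap 1 2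
/-- the permutation `(0 3)(1 2)` -/
def gV : Perm (Fin 4) := Equiv.swap 0 3 * Equiv.swap 1 2

/-! ### The 2-3 move

A 2-3 move replaces two distinct model tetrahedra `tA, tB` of `T`, glued to each
other along a face, by three model tetrahedra `tP, tQ, tR` of `T'` arranged around
a new edge joining the two vertices (apexes) of `tA`, `tB` not on the shared face.
`πA, …, πR` record (orientation-preserving) identifications of the model tetrahedra
involved with the labelled tetrahedra of the canonical local picture of the move:
for `tA` the apex is vertex `πA 0` and the shared face is `(tA, πA 0)`; the new
central edge of `T'` is the edge `{πP 0, πP 1}` of `tP`.  The data `ρ, μ, Φ, τ`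
record how the tetrahedra, faces and face pairings away from the move are carried
from `T` to `T'`. -/

structure Move23 (T T' : Tri) : Type where
  tA : T.ι
  tB : T.ι
  hAB : tA ≠ tB
  πA : Perm (Fin 4)
  πB : Perm (Fin 4)
  hsA : Perm.sign πA = 1
  hsB : Perm.sign πB = 1
  hglue : T.glue (tA, πA 0) = some ((tB, πB 0), πB * p23 * πA⁻¹)
  tP : T'.ι
  tQ : T'.ι
  tR : T'.ι
  hPQ : tP ≠ tQ
  hPR : tP ≠ tR
  hQR : tQ ≠ tR
  πP : Perm (Fin 4)
  πQ : Perm (Fin 4)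
  πR : Perm (Fin 4)
  hsP : Perm.sign πP = 1
  hsQ : Perm.sign πQ = 1
  hsR : Perm.sign πR = 1
  hPQglue : T'.glue (tP, πP 2) = some ((tQ, πQ 3), πQ * p23 * πP⁻¹)
  hQRglue : T'.glue (tQ, πQ 2) = some ((tR, πR 3), πR * p23 * πQ⁻¹)
  hRPglue : T'.glue (tR, πR 2) = some ((tP, πP 3), πP * p23 * πR⁻¹)
  ρ : {t : T.ι // t ≠ tA ∧ t ≠ tB} ≃ {s : T'.ι // s ≠ tP ∧ s ≠ tQ ∧ s ≠ tR}
  μ : T.ι → Perm (Fin 4)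
  hμ : ∀ t, Perm.sign (μ t) = 1
  Φ : T.ι × Fin 4 → T'.ι × Fin 4
  τ : T.ι × Fin 4 → Perm (Fin 4)
  hΦout : ∀ (t : T.ι) (h : t ≠ tA ∧ t ≠ tB) (j : Fin 4),
    Φ (t, j) = ((ρ ⟨t, h⟩).val, μ t j) ∧ τ (t, j) = μ t
  hΦA : ∀ k : Fin 4, k ≠ 0 →
    Φ (tA, πA k) = ![(tP, πP 1), (tQ, πQ 1), (tR, πR 1), (tP, πP 1)] k ∧
    τ (tA, πA k) = ![1, πQ * πA⁻¹, πR * c132 * πA⁻¹, πP * c123 * πA⁻¹] k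
  hΦB : ∀ k : Fin 4, k ≠ 0 →
    Φ (tB, πB k) = ![(tQ, πQ 0), (tQ, πQ 0), (tP, πP 0), (tR, πR 0)] k ∧
    τ (tB, πB k) = ![1, πQ * c01x23 * πB⁻¹, πP * c012 * πB⁻¹, πR * c013 * πB⁻¹] k
  hcompat : ∀ F G σ, F ≠ (tA, πA 0) → F ≠ (tB, πB 0) →
      T.glue F = some (G, σ) → T'.glue (Φ F) = some (Φ G, τ G * σ * (τ F)⁻¹)
  hcompat_none : ∀ F, F ≠ (tA, πA 0) → F ≠ (tB, πB 0) →
      T.glue F = none → T'.glue (Φ F) = none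

/-- The new central (degree three) edge of a 2-3 move, as a model edge of `T'`. -/
def Move23.centralEdge {T T' : Tri} (m : Move23 T T') : T'.ModelEdge :=
  (m.tP, epair (m.πP 0) (m.πP 1) (m.πP.injective.ne (by decide)))

/-- Correspondence between (model) edges of `T` and of `T'` under a 2-3 move:
every model edge not on the central edge survives, carried by the face
correspondence `Φ, τ` through any face containing it that is not the disappearing
shared face. -/
def Move23.edgeCorr {T T' : Tri} (m : Move23 T T') :
    T.ModelEdge → T'.ModelEdge → Prop := fun e f =>
  ∃ i : Fin 4, i ∉ e.2.1 ∧ (e.1, i) ≠ (m.tA, m.πA 0) ∧ (e.1, i) ≠ (m.tB, m.πB 0) ∧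
    f.1 = (m.Φ (e.1, i)).1 ∧ f.2 = e.2.map (m.τ (e.1, i))

/-- `T` and `T'` are related by a 2-3 move. -/
def Pachner23 (T T' : Tri) : Prop := Nonempty (Move23 T T')

/-- `T` and `T'` are related by a 2-3 move or by a 3-2 move. -/
def PachnerStep (T T' : Tri) : Prop := Pachner23 T T' ∨ Pachner23 T' T

/-- connectivity by a sequence of 2-3 and 3-2 moves -/
def MovePath (T T' : Tri) : Prop :=
  ∃ (N : ℕ) (seq : Fin (N + 1) → Tri), seq 0 = T ∧ seq (Fin.last N) = T' ∧
    ∀ k : Fin N, PachnerStep (seq k.castSucc) (seq k.succ)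

/-- connectivity by a sequence of 2-3 and 3-2 moves in which no triangulation,
including the two endpoints, has a degree one edge -/
def NoDegOnePath (T T' : Tri) : Prop :=
  ∃ (N : ℕ) (seq : Fin (N + 1) → Tri), seq 0 = T ∧ seq (Fin.last N) = T' ∧
    (∀ k, ¬ (seq k).HasDegOneEdge) ∧
    ∀ k : Fin N, PachnerStep (seq k.castSucc) (seq k.succ)

end Paper

/-!
A model edge has exactly two faces, and it is identified only with the model edges it meets
across them.  So it has degree one exactly when these two faces are glued to each other (or left
unglued), and degree two when its class consists of two model edges meeting only each other.
Away from the two old tetrahedra the move keeps every face pairing, so there an edge and its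
image have degree one together.  An edge of the shared triangle lies in both old tetrahedra, so
its degree is at least two; if its image has degree one, its two model edges meet only each
other.  An edge through an apex lies in one old tetrahedron but in two new ones, glued along an
internal face, so its image has degree at least two, and exactly two if the edge had degree
one.  The central edge lies in three new tetrahedra.
-/

namespace Paper

open Equiv

instance : DecidableEq EdgePair := inferInstanceAs (DecidableEq {s : Finset (Fin 4) // s.card = 2})

instance : Fintype EdgePair := inferInstanceAs (Fintype {s : Finset (Fin 4) // s.card = 2})

namespace EdgePair

theorem ext {s t : EdgePair} (h : s.1 = t.1) : s = t := Subtype.ext h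

@[simp] theorem map_map (s : EdgePair) (π ρ : Perm (Fin 4)) :
    (s.map π).map ρ = s.map (ρ * π) :=
  ext (by simp [EdgePair.map, Finset.image_image, Function.comp_def])

@[simp] theorem map_one (s : EdgePair) : s.map 1 = s := ext (by simp [EdgePair.map])

theorem map_injective (π : Perm (Fin 4)) : Function.Injective fun s : EdgePair => s.map π :=
  fun _ _ h => ext (Finset.image_injective π.injective (congrArg Subtype.val h))

@[simp] theorem apply_mem_map {s : EdgePair} {π : Perm (Fin 4)} {a : Fin 4} :
    π a ∈ (s.map π).1 ↔ a ∈ s.1 :=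
  π.injective.mem_finset_image

theorem eq_or_eq_of_not_mem : ∀ {s : EdgePair} {a b x : Fin 4},
    a ∉ s.1 → b ∉ s.1 → a ≠ b → x ∉ s.1 → x = a ∨ x = b := by
  decide

theorem exists_ne_not_mem : ∀ {s : EdgePair} {j : Fin 4}, j ∉ s.1 →
    ∃ j', j' ∉ s.1 ∧ j ≠ j' := by
  decide

end EdgePair

namespace Tri

variable (T : Tri)

theorem edgeAdj_iff {e f : T.ModelEdge} :
    T.edgeAdj e f ↔
      ∃ i G σ, i ∉ e.2.1 ∧ T.glue (e.1, i) = some (G, σ) ∧ f = (G.1, e.2.map σ) := by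
  constructor
  · rintro ⟨i, G, σ, hi, hg, h₁, h₂⟩
    exact ⟨i, G, σ, hi, hg, Prod.ext h₁ (EdgePair.ext h₂)⟩
  · rintro ⟨i, G, σ, hi, hg, rfl⟩
    exact ⟨i, G, σ, hi, hg, rfl, rfl⟩

theorem edgeAdj_of_glue {t : T.ι} {s : EdgePair} {i : Fin 4} {G : T.ι × Fin 4}
    {σ : Perm (Fin 4)} (hi : i ∉ s.1) (hg : T.glue (t, i) = some (G, σ)) :
    T.edgeAdj (t, s) (G.1, s.map σ) :=
  ⟨i, G, σ, hi, hg, rfl, rfl⟩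

theorem edgeAdj_symm {e f : T.ModelEdge} (h : T.edgeAdj e f) : T.edgeAdj f e := by
  obtain ⟨i, G, σ, hi, hg, rfl⟩ := T.edgeAdj_iff.1 h
  obtain ⟨t, s⟩ := e
  have hG : G.2 ∉ (s.map σ).1 := by
    rw [← T.glue_vertex _ _ _ hg]
    exact EdgePair.apply_mem_map.not.2 hi
  simpa using T.edgeAdj_of_glue hG (T.glue_symm _ _ _ hg)

theorem edgeOf_eq_of_edgeAdj {e f : T.ModelEdge} (h : T.edgeAdj e f) :
    T.edgeOf e = T.edgeOf f :=
  Quot.sound h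

theorem mem_of_edgeOf_eq {S : Set T.ModelEdge} (hS : ∀ a ∈ S, ∀ b, T.edgeAdj a b → b ∈ S)
    {e e' : T.ModelEdge} (he : e ∈ S) (h : T.edgeOf e' = T.edgeOf e) : e' ∈ S := by
  have hresp : ∀ a b, T.edgeAdj a b → (a ∈ S) = (b ∈ S) := fun a b hab =>
    propext ⟨(hS a · b hab), (hS b · a (T.edgeAdj_symm hab))⟩
  exact (congrArg (Quot.lift (· ∈ S) hresp) h).mpr he

theorem degree_eq_one_iff {e : T.ModelEdge} :
    T.degree (T.edgeOf e) = 1 ↔ ∀ b, T.edgeAdj e b → b = e := by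
  rw [Tri.degree, Nat.card_eq_one_iff_unique]
  constructor
  · rintro ⟨hsub, -⟩ b hb
    exact congrArg Subtype.val (hsub.elim ⟨b, (T.edgeOf_eq_of_edgeAdj hb).symm⟩ ⟨e, rfl⟩)
  · intro h
    have hS : ∀ a ∈ ({e} : Set T.ModelEdge), ∀ b, T.edgeAdj a b → b ∈ ({e} : Set _) := by
      rintro a rfl b hb
      exact h b hb
    refine ⟨⟨fun ⟨x, hx⟩ ⟨y, hy⟩ => ?_⟩, ⟨⟨e, rfl⟩⟩⟩
    obtain rfl : x = e := T.mem_of_edgeOf_eq hS rfl hx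
    obtain rfl : y = x := T.mem_of_edgeOf_eq hS rfl hy
    rfl

theorem degree_ne_one_of_edgeAdj {e f : T.ModelEdge} (h : T.edgeAdj e f) (hne : e ≠ f) :
    T.degree (T.edgeOf e) ≠ 1 :=
  fun h₁ => hne (T.degree_eq_one_iff.1 h₁ f h).symm

theorem degree_eq_two_of_edgeAdj {e₁ e₂ : T.ModelEdge} (h : T.edgeAdj e₁ e₂)
    (hne : e₁ ≠ e₂) (h₁ : ∀ b, T.edgeAdj e₁ b → b = e₂)
    (h₂ : ∀ b, T.edgeAdj e₂ b → b = e₁) :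
    T.degree (T.edgeOf e₁) = 2 := by
  have hS : ∀ a ∈ ({e₁, e₂} : Set T.ModelEdge), ∀ b, T.edgeAdj a b →
      b ∈ ({e₁, e₂} : Set _) := by
    rintro a (rfl | rfl) b hb
    · exact Or.inr (h₁ b hb)
    · exact Or.inl (h₂ b hb)
  rw [Tri.degree, Nat.card_eq_two_iff]
  refine ⟨⟨e₁, rfl⟩, ⟨e₂, (T.edgeOf_eq_of_edgeAdj h).symm⟩,
    fun h' => hne (congrArg Subtype.val h'), Set.eq_univ_of_forall fun ⟨x, hx⟩ => ?_⟩
  rcases T.mem_of_edgeOf_eq hS (Or.inl rfl) hx with rfl | rfl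
  · exact Or.inl rfl
  · exact Or.inr rfl

theorem glue_eq_of_degree_eq_one {t : T.ι} {s : EdgePair} {i j : Fin 4} {G : T.ι × Fin 4}
    {σ : Perm (Fin 4)} (h : T.degree (T.edgeOf (t, s)) = 1) (hi : i ∉ s.1) (hj : j ∉ s.1)
    (hij : i ≠ j) (hg : T.glue (t, i) = some (G, σ)) : G = (t, j) ∧ s.map σ = s := by
  obtain ⟨hG₁, hσ⟩ := Prod.mk.inj (T.degree_eq_one_iff.1 h _ (T.edgeAdj_of_glue hi hg))
  have hG₂ : G.2 ∉ s.1 := by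
    rw [← T.glue_vertex _ _ _ hg, ← hσ]
    exact EdgePair.apply_mem_map.not.2 hi
  rcases EdgePair.eq_or_eq_of_not_mem hi hj hij hG₂ with hG₂ | hG₂
  · exact absurd (Prod.ext hG₁ hG₂) (T.glue_ne _ _ hg)
  · exact ⟨Prod.ext hG₁ hG₂, hσ⟩

end Tri

theorem ne_zero_cases : ∀ {k : Fin 4}, k ≠ 0 → k = 1 ∨ k = 2 ∨ k = 3 := by
  decide

theorem p23_mul_self : p23 * p23 = 1 := by
  decide

theorem p23_inv : p23⁻¹ = p23 := by
  decide

namespace Move23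

/-! In the canonical picture of the move the old tetrahedra are indexed by `b : Bool`
(`false ↦ tA`, `true ↦ tB`) and the new ones by `k ∈ {1, 2, 3}` (`1 ↦ tQ`, `2 ↦ tR`,
`3 ↦ tP`).  Face `k ≠ 0` of old tetrahedron `b` becomes the face opposite `outerVertex b` of
new tetrahedron `newIndex b k`, with vertices relabelled by `relabel b k`; internal face
`v ∈ {2, 3}` of new tetrahedron `k` is glued to new tetrahedron `nextIndex v k`.  The apex of
old tetrahedron `b` is `oldPerm b 0`, so its edge `u.map (oldPerm b)` passes through the apex
when `0 ∈ u` and lies on the shared triangle otherwise. -/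

def newIndex (b : Bool) : Perm (Fin 4) := if b then p23 else 1

def outerVertex (b : Bool) : Fin 4 := if b then 0 else 1

def relabel (b : Bool) : Fin 4 → Perm (Fin 4) :=
  if b then ![1, c01x23, c012, c013] else ![1, 1, c132, c123]

def nextIndex (v : Fin 4) : Perm (Fin 4) := if v = 2 then c123 else c132

theorem relabel_apply_self : ∀ {b : Bool} {k : Fin 4}, k ≠ 0 →
    relabel b k k = outerVertex b := by
  decide

theorem newIndex_ne_zero : ∀ {b : Bool} {k : Fin 4}, k ≠ 0 → newIndex b k ≠ 0 := by
  decide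

theorem newIndex_newIndex : ∀ (b : Bool) (k : Fin 4), newIndex b (newIndex b k) = k := by
  decide

theorem newIndex_not_newIndex : ∀ (b : Bool) (k : Fin 4),
    newIndex (!b) (newIndex b k) = p23 k := by
  decide

theorem newIndex_not_p23 : ∀ (b : Bool) (k : Fin 4), newIndex (!b) (p23 k) = newIndex b k := by
  decide

theorem relabel_partner : ∀ {b : Bool} {u : EdgePair} {k : Fin 4},
    0 ∉ u.1 → k ≠ 0 → k ∉ u.1 →
    (u.map p23).map (relabel (!b) (p23 k)) = u.map (relabel b k) := by
  decide

theorem equator_map_p23 : ∀ {u : EdgePair} {k : Fin 4}, 0 ∉ u.1 → k ≠ 0 → k ∉ u.1 →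
    0 ∉ (u.map p23).1 ∧ p23 k ≠ 0 ∧ p23 k ∉ (u.map p23).1 := by
  decide

theorem exists_internal_face : ∀ {b : Bool} {u : EdgePair} {j : Fin 4},
    0 ∈ u.1 → j ∉ u.1 →
    ∃ l v, l ∉ u.1 ∧ l ≠ j ∧ (v = 2 ∨ v = 3) ∧
      v ≠ outerVertex b ∧ p23 v ≠ outerVertex b ∧
      v ∉ (u.map (relabel b j)).1 ∧ nextIndex v (newIndex b j) = newIndex b l ∧
      (u.map (relabel b j)).map p23 = u.map (relabel b l) := by
  decide

variable {T T' : Tri} (m : Move23 T T')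

def oldTet (b : Bool) : T.ι := if b then m.tB else m.tA

def oldPerm (b : Bool) : Perm (Fin 4) := if b then m.πB else m.πA

def sharedFace (b : Bool) : T.ι × Fin 4 := (m.oldTet b, m.oldPerm b 0)

def newTet (k : Fin 4) : T'.ι := ![m.tP, m.tQ, m.tR, m.tP] k

def newPerm (k : Fin 4) : Perm (Fin 4) := ![m.πP, m.πQ, m.πR, m.πP] k

def newEdge (k : Fin 4) (w : EdgePair) : T'.ModelEdge := (m.newTet k, w.map (m.newPerm k))

/-- The model edge of `T'` that the model edge `(F.1, s)` of `T` becomes when carried through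
its face `F`. -/
def tr (F : T.ι × Fin 4) (s : EdgePair) : T'.ModelEdge := ((m.Φ F).1, s.map (m.τ F))

@[simp] theorem tr_fst (F : T.ι × Fin 4) (s : EdgePair) : (m.tr F s).1 = (m.Φ F).1 := rfl

@[simp] theorem newEdge_fst (k : Fin 4) (w : EdgePair) : (m.newEdge k w).1 = m.newTet k := rfl

theorem oldTet_not_ne (b : Bool) : m.oldTet (!b) ≠ m.oldTet b := by
  cases b
  exacts [m.hAB.symm, m.hAB]

theorem glue_sharedFace (b : Bool) :
    T.glue (m.sharedFace b) =
      some (m.sharedFace (!b), m.oldPerm (!b) * p23 * (m.oldPerm b)⁻¹) := by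
  cases b
  · exact m.hglue
  · simp only [sharedFace, oldTet, oldPerm, Bool.not_true, Bool.false_eq_true, if_true, if_false]
    rw [T.glue_symm _ _ _ m.hglue]
    simp [mul_assoc, p23_inv]

theorem oldFace_ne_sharedFace {b : Bool} {k : Fin 4} (hk : k ≠ 0) (b' : Bool) :
    (m.oldTet b, m.oldPerm b k) ≠ m.sharedFace b' := by
  intro h
  obtain ⟨ht, hv⟩ := Prod.mk.inj h
  cases b <;> cases b' <;>
    simp only [oldTet, oldPerm, Bool.false_eq_true, if_true, if_false] at ht hv
  exacts [hk (m.πA.injective hv), m.hAB ht, m.hAB ht.symm, hk (m.πB.injective hv)]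

theorem Φ_oldFace {b : Bool} {k : Fin 4} (hk : k ≠ 0) :
    m.Φ (m.oldTet b, m.oldPerm b k) =
      (m.newTet (newIndex b k), m.newPerm (newIndex b k) (outerVertex b)) := by
  cases b
  · have := (m.hΦA k hk).1
    fin_cases k <;> simp_all [oldTet, oldPerm, newTet, newPerm, newIndex, outerVertex]
  · have := (m.hΦB k hk).1
    fin_cases k <;> simp_all [oldTet, oldPerm, newTet, newPerm, newIndex, outerVertex] <;>
      exact ⟨rfl, rfl⟩

theorem τ_oldFace {b : Bool} {k : Fin 4} (hk : k ≠ 0) :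
    m.τ (m.oldTet b, m.oldPerm b k) =
      m.newPerm (newIndex b k) * relabel b k * (m.oldPerm b)⁻¹ := by
  cases b
  · have := (m.hΦA k hk).2
    fin_cases k <;> simp_all [oldPerm, oldTet, newPerm, newIndex, relabel]
  · have := (m.hΦB k hk).2
    fin_cases k <;> simp_all [oldPerm, oldTet, newPerm, newIndex, relabel] <;> rfl

theorem tr_oldFace {b : Bool} {k : Fin 4} (hk : k ≠ 0) (u : EdgePair) :
    m.tr (m.oldTet b, m.oldPerm b k) (u.map (m.oldPerm b)) =
      m.newEdge (newIndex b k) (u.map (relabel b k)) := by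
  simp only [tr, newEdge, m.Φ_oldFace hk, m.τ_oldFace hk, EdgePair.map_map, inv_mul_cancel_right]
  rfl

theorem newTet_inj {j k : Fin 4} (hj : j ≠ 0) (hk : k ≠ 0) :
    m.newTet j = m.newTet k ↔ j = k := by
  have := m.hPQ; have := m.hPR; have := m.hQR
  fin_cases j <;> fin_cases k <;> simp_all [newTet, eq_comm]

theorem fst_ρ_ne_newTet (x : {t : T.ι // t ≠ m.tA ∧ t ≠ m.tB}) (k : Fin 4) :
    (m.ρ x).1 ≠ m.newTet k := by
  obtain ⟨hP, hQ, hR⟩ := (m.ρ x).2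
  fin_cases k <;> simpa [newTet]

theorem glue_newTet {k v : Fin 4} (hk : k ≠ 0) (hv : v = 2 ∨ v = 3) :
    T'.glue (m.newTet k, m.newPerm k v) =
      some ((m.newTet (nextIndex v k), m.newPerm (nextIndex v k) (p23 v)),
        m.newPerm (nextIndex v k) * p23 * (m.newPerm k)⁻¹) := by
  rcases hv with rfl | rfl <;> rcases ne_zero_cases hk with rfl | rfl | rfl
  · exact m.hQRglue
  · exact m.hRPglue
  · exact m.hPQglue
  · show T'.glue (m.tQ, m.πQ 3) = some ((m.tP, m.πP 2), m.πP * p23 * m.πQ⁻¹)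
    simp [T'.glue_symm _ _ _ m.hPQglue, mul_assoc, p23_inv]
  · show T'.glue (m.tR, m.πR 3) = some ((m.tQ, m.πQ 2), m.πQ * p23 * m.πR⁻¹)
    simp [T'.glue_symm _ _ _ m.hQRglue, mul_assoc, p23_inv]
  · show T'.glue (m.tP, m.πP 3) = some ((m.tR, m.πR 2), m.πR * p23 * m.πP⁻¹)
    simp [T'.glue_symm _ _ _ m.hRPglue, mul_assoc, p23_inv]

theorem face_cases (F : T.ι × Fin 4) (hF : ∀ b, F ≠ m.sharedFace b) :
    (∃ b k, k ≠ 0 ∧ F = (m.oldTet b, m.oldPerm b k)) ∨ (F.1 ≠ m.tA ∧ F.1 ≠ m.tB) := by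
  obtain ⟨t, i⟩ := F
  have hold : ∀ b, t = m.oldTet b →
      ∃ b k, k ≠ 0 ∧ (t, i) = (m.oldTet b, m.oldPerm b k) := by
    rintro b rfl
    refine ⟨b, (m.oldPerm b)⁻¹ i, fun h0 => hF b ?_, by simp⟩
    simp [sharedFace, ← h0]
  by_cases hA : t = m.tA
  · exact Or.inl (hold false hA)
  by_cases hB : t = m.tB
  · exact Or.inl (hold true hB)
  exact Or.inr ⟨hA, hB⟩

theorem Φ_snd {F : T.ι × Fin 4} (hF : ∀ b, F ≠ m.sharedFace b) :
    (m.Φ F).2 = m.τ F F.2 := by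
  rcases m.face_cases F hF with ⟨b, k, hk, rfl⟩ | ⟨hA, hB⟩
  · simp [m.Φ_oldFace hk, m.τ_oldFace hk, relabel_apply_self hk]
  · rw [(m.hΦout F.1 ⟨hA, hB⟩ F.2).1, (m.hΦout F.1 ⟨hA, hB⟩ F.2).2]

theorem Φ_snd_not_mem {t : T.ι} {i : Fin 4} {s : EdgePair} (hi : i ∉ s.1)
    (hF : ∀ b, (t, i) ≠ m.sharedFace b) : (m.Φ (t, i)).2 ∉ (m.tr (t, i) s).2.1 := by
  rw [m.Φ_snd hF]
  exact EdgePair.apply_mem_map.not.2 hi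

theorem glue_ne_sharedFace {F G : T.ι × Fin 4} {σ : Perm (Fin 4)}
    (hF : ∀ b, F ≠ m.sharedFace b) (hg : T.glue F = some (G, σ)) (b : Bool) :
    G ≠ m.sharedFace b := by
  rintro rfl
  have h := T.glue_symm _ _ _ hg
  rw [m.glue_sharedFace] at h
  exact hF (!b) (Prod.mk.inj (Option.some.inj h)).1.symm

theorem eq_oldFace_of_fst_Φ_eq {G : T.ι × Fin 4} (hG : ∀ b, G ≠ m.sharedFace b) {k : Fin 4}
    (hk : k ≠ 0) (h : (m.Φ G).1 = m.newTet k) :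
    ∃ b, G = (m.oldTet b, m.oldPerm b (newIndex b k)) := by
  rcases m.face_cases G hG with ⟨b, j, hj, rfl⟩ | ⟨hA, hB⟩
  · rw [m.Φ_oldFace hj, m.newTet_inj (newIndex_ne_zero hj) hk] at h
    exact ⟨b, by rw [← h, newIndex_newIndex]⟩
  · rw [(m.hΦout _ ⟨hA, hB⟩ _).1] at h
    exact absurd h (m.fst_ρ_ne_newTet _ _)

theorem eq_of_fst_Φ_eq_ρ {G : T.ι × Fin 4} (hG : ∀ b, G ≠ m.sharedFace b)
    (x : {t : T.ι // t ≠ m.tA ∧ t ≠ m.tB}) (h : (m.Φ G).1 = (m.ρ x).1) :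
    G.1 = x.1 ∧ m.τ G = m.μ x.1 := by
  rcases m.face_cases G hG with ⟨b, j, hj, rfl⟩ | ⟨hA, hB⟩
  · rw [m.Φ_oldFace hj] at h
    exact absurd h.symm (m.fst_ρ_ne_newTet _ _)
  · obtain ⟨hΦ, hτ⟩ := m.hΦout _ ⟨hA, hB⟩ G.2
    rw [hΦ] at h
    obtain rfl : (⟨G.1, hA, hB⟩ : {t : T.ι // t ≠ m.tA ∧ t ≠ m.tB}) = x :=
      m.ρ.injective (Subtype.ext h)
    exact ⟨rfl, hτ⟩

theorem tr_injective (F : T.ι × Fin 4) : Function.Injective (m.tr F) :=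
  fun _ _ h => EdgePair.map_injective _ (congrArg Prod.snd h)

theorem edgeAdj_tr {t : T.ι} {i : Fin 4} {s : EdgePair} {G : T.ι × Fin 4} {σ : Perm (Fin 4)}
    (hi : i ∉ s.1) (hF : ∀ b, (t, i) ≠ m.sharedFace b) (hg : T.glue (t, i) = some (G, σ)) :
    T'.edgeAdj (m.tr (t, i) s) (m.tr G (s.map σ)) := by
  have h := T'.edgeAdj_of_glue (m.Φ_snd_not_mem hi hF) (m.hcompat _ _ _ (hF false) (hF true) hg)
  simpa [tr, mul_assoc] using h

theorem exists_glue_of_glue_Φ {F : T.ι × Fin 4} {W : T'.ι × Fin 4} {ξ : Perm (Fin 4)}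
    (hF : ∀ b, F ≠ m.sharedFace b) (h : T'.glue (m.Φ F) = some (W, ξ)) :
    ∃ G σ, T.glue F = some (G, σ) ∧ W = m.Φ G ∧ ξ = m.τ G * σ * (m.τ F)⁻¹ := by
  rcases hg : T.glue F with _ | ⟨G, σ⟩
  · rw [m.hcompat_none F (hF false) (hF true) hg] at h
    exact absurd h (Option.some_ne_none _).symm
  · rw [m.hcompat F G σ (hF false) (hF true) hg] at h
    obtain ⟨hW, hξ⟩ := Prod.mk.inj (Option.some.inj h)
    exact ⟨G, σ, rfl, hW.symm, hξ.symm⟩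

theorem tr_eq_of_glue_Φ {t : T.ι} {s : EdgePair} {i j : Fin 4} {W : T'.ι × Fin 4}
    {ξ : Perm (Fin 4)} (h : T.degree (T.edgeOf (t, s)) = 1) (hi : i ∉ s.1) (hj : j ∉ s.1)
    (hij : i ≠ j) (hF : ∀ b, (t, i) ≠ m.sharedFace b)
    (hg : T'.glue (m.Φ (t, i)) = some (W, ξ)) :
    (W.1, (m.tr (t, i) s).2.map ξ) = m.tr (t, j) s := by
  obtain ⟨G, σ, hg', rfl, rfl⟩ := m.exists_glue_of_glue_Φ hF hg
  obtain ⟨rfl, hσ⟩ := T.glue_eq_of_degree_eq_one h hi hj hij hg'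
  simp only [tr, EdgePair.map_map, inv_mul_cancel_right]
  rw [← EdgePair.map_map, hσ]

theorem tr_of_outside {t : T.ι} (ht : t ≠ m.tA ∧ t ≠ m.tB) (i : Fin 4) (s : EdgePair) :
    m.tr (t, i) s = ((m.ρ ⟨t, ht⟩).1, s.map (m.μ t)) := by
  rw [tr, (m.hΦout t ht i).1, (m.hΦout t ht i).2]

theorem degree_tr_eq_one_iff_of_outside {t : T.ι} (ht : t ≠ m.tA ∧ t ≠ m.tB) (s : EdgePair)
    (i : Fin 4) :
    T'.degree (T'.edgeOf (m.tr (t, i) s)) = 1 ↔ T.degree (T.edgeOf (t, s)) = 1 := by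
  have hF : ∀ j b, (t, j) ≠ m.sharedFace b := by
    rintro j (_ | _) h
    exacts [ht.1 (congrArg Prod.fst h), ht.2 (congrArg Prod.fst h)]
  have htr : ∀ j, m.tr (t, j) s = m.tr (t, i) s := fun j => by
    rw [m.tr_of_outside ht, m.tr_of_outside ht]
  constructor
  · intro h
    refine T.degree_eq_one_iff.2 fun _ hadj => ?_
    obtain ⟨j, G, σ, hj, hg, rfl⟩ := T.edgeAdj_iff.1 hadj
    have hadj := m.edgeAdj_tr hj (hF j) hg
    rw [htr] at hadj
    have heq := T'.degree_eq_one_iff.1 h _ hadj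
    rw [m.tr_of_outside ht i] at heq
    obtain ⟨hG, hτ⟩ :=
      m.eq_of_fst_Φ_eq_ρ (m.glue_ne_sharedFace (hF j) hg) _ (congrArg Prod.fst heq)
    have hσ : s.map σ = s := by
      apply EdgePair.map_injective (m.μ t)
      simpa [tr, hτ] using congrArg Prod.snd heq
    exact Prod.ext hG hσ
  · intro h
    refine T'.degree_eq_one_iff.2 fun _ hadj => ?_
    obtain ⟨x, W, ξ, hx, hg, rfl⟩ := T'.edgeAdj_iff.1 hadj
    have hj : (m.μ t)⁻¹ x ∉ s.1 := by
      rw [← EdgePair.apply_mem_map (π := m.μ t)]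
      simpa [m.tr_of_outside ht] using hx
    obtain ⟨j', hj', hjj'⟩ := EdgePair.exists_ne_not_mem hj
    have hΦ : m.Φ (t, (m.μ t)⁻¹ x) = ((m.tr (t, i) s).1, x) := by
      simp [(m.hΦout t ht _).1, m.tr_of_outside ht]
    rw [← hΦ] at hg
    have h' := m.tr_eq_of_glue_Φ h hj hj' hjj' (hF _) hg
    rwa [htr j', htr] at h'

theorem centralEdge_degree_ne_one : T'.degree (T'.edgeOf m.centralEdge) ≠ 1 := by
  have h2 : m.πP 2 ∉ (epair (m.πP 0) (m.πP 1) (m.πP.injective.ne (by decide))).1 := by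
    simp [epair, m.πP.injective.eq_iff]
  refine T'.degree_ne_one_of_edgeAdj (T'.edgeAdj_of_glue h2 m.hPQglue) ?_
  exact fun h => m.hPQ (congrArg Prod.fst h)

/-- The situation of an edge through an apex: its two faces `i₁, i₂` are carried into different
new tetrahedra, which are glued along the internal face `a`. -/
theorem degree_tr_of_internal_face {t : T.ι} {s : EdgePair} {i₁ i₂ a : Fin 4}
    {W : T'.ι × Fin 4} {π : Perm (Fin 4)} (h₁ : i₁ ∉ s.1) (h₂ : i₂ ∉ s.1)
    (h₁₂ : i₁ ≠ i₂)
    (hF₁ : ∀ b, (t, i₁) ≠ m.sharedFace b) (hF₂ : ∀ b, (t, i₂) ≠ m.sharedFace b)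
    (hne : (m.Φ (t, i₁)).1 ≠ (m.Φ (t, i₂)).1) (ha : a ∉ (m.tr (t, i₁) s).2.1)
    (ha₁ : a ≠ (m.Φ (t, i₁)).2) (hW : W.2 ≠ (m.Φ (t, i₂)).2)
    (hg : T'.glue ((m.Φ (t, i₁)).1, a) = some (W, π))
    (hf₂ : m.tr (t, i₂) s = (W.1, (m.tr (t, i₁) s).2.map π)) :
    T'.degree (T'.edgeOf (m.tr (t, i₁) s)) ≠ 1 ∧
      (T.degree (T.edgeOf (t, s)) = 1 → T'.degree (T'.edgeOf (m.tr (t, i₁) s)) = 2) := by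
  have hadj : T'.edgeAdj (m.tr (t, i₁) s) (m.tr (t, i₂) s) := hf₂ ▸ T'.edgeAdj_of_glue ha hg
  have hne' : m.tr (t, i₁) s ≠ m.tr (t, i₂) s :=
    fun h => hne (by simpa using congrArg Prod.fst h)
  refine ⟨T'.degree_ne_one_of_edgeAdj hadj hne', fun h => ?_⟩
  refine T'.degree_eq_two_of_edgeAdj hadj hne' (fun _ hb => ?_) (fun _ hb => ?_)
  · obtain ⟨x, G, σ, hx, hg', rfl⟩ := T'.edgeAdj_iff.1 hb
    rcases EdgePair.eq_or_eq_of_not_mem (m.Φ_snd_not_mem h₁ hF₁) ha ha₁.symm hx with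
      rfl | rfl
    · exact m.tr_eq_of_glue_Φ h h₁ h₂ h₁₂ hF₁ hg'
    · rw [tr_fst, hg] at hg'
      cases hg'
      exact hf₂.symm
  · obtain ⟨x, G, σ, hx, hg', rfl⟩ := T'.edgeAdj_iff.1 hb
    have hW₂ : W.2 ∉ (m.tr (t, i₂) s).2.1 := by
      rw [hf₂, ← T'.glue_vertex _ _ _ hg]
      exact EdgePair.apply_mem_map.not.2 ha
    rcases EdgePair.eq_or_eq_of_not_mem (m.Φ_snd_not_mem h₂ hF₂) hW₂ hW.symm hx with
      rfl | rfl
    · exact m.tr_eq_of_glue_Φ h h₂ h₁ h₁₂.symm hF₂ hg'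
    · rw [hf₂] at hg' ⊢
      rw [T'.glue_symm _ _ _ hg] at hg'
      cases hg'
      simp only [EdgePair.map_map, inv_mul_cancel, EdgePair.map_one]
      rfl

theorem apex_edge_degree {b : Bool} {u : EdgePair} (hu : 0 ∈ u.1) {j : Fin 4} (hj : j ∉ u.1) :
    T'.degree (T'.edgeOf (m.tr (m.oldTet b, m.oldPerm b j) (u.map (m.oldPerm b)))) ≠ 1 ∧
      (T.degree (T.edgeOf (m.oldTet b, u.map (m.oldPerm b))) = 1 →
        T'.degree (T'.edgeOf (m.tr (m.oldTet b, m.oldPerm b j) (u.map (m.oldPerm b)))) = 2) := by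
  obtain ⟨l, v, hl, hlj, hv, hv₁, hv₂, hvu, hnext, hmap⟩ :=
    exists_internal_face (b := b) hu hj
  have hj0 : j ≠ 0 := fun h => hj (h ▸ hu)
  have hl0 : l ≠ 0 := fun h => hl (h ▸ hu)
  have hint := m.glue_newTet (newIndex_ne_zero (b := b) hj0) hv
  rw [hnext] at hint
  refine m.degree_tr_of_internal_face (a := m.newPerm (newIndex b j) v)
    (W := (m.newTet (newIndex b l), m.newPerm (newIndex b l) (p23 v)))
    (EdgePair.apply_mem_map.not.2 hj) (EdgePair.apply_mem_map.not.2 hl)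
    ((m.oldPerm b).injective.ne hlj.symm) (m.oldFace_ne_sharedFace hj0)
    (m.oldFace_ne_sharedFace hl0) ?_ ?_ ?_ ?_ (by rw [m.Φ_oldFace hj0]; exact hint) ?_
  · rw [m.Φ_oldFace hj0, m.Φ_oldFace hl0]
    exact (m.newTet_inj (newIndex_ne_zero hj0) (newIndex_ne_zero hl0)).not.2
      ((newIndex b).injective.ne hlj.symm)
  · rw [m.tr_oldFace hj0]
    exact EdgePair.apply_mem_map.not.2 hvu
  · rw [m.Φ_oldFace hj0]
    exact (m.newPerm _).injective.ne hv₁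
  · rw [m.Φ_oldFace hl0]
    exact (m.newPerm _).injective.ne hv₂
  · rw [m.tr_oldFace hj0, m.tr_oldFace hl0, ← hmap]
    simp [newEdge, mul_assoc]
    rfl

theorem equator_edgeAdj_eq_partner {b : Bool} {u : EdgePair} {k : Fin 4} (hu : 0 ∉ u.1)
    (hk : k ≠ 0) (hku : k ∉ u.1)
    (h : T'.degree (T'.edgeOf (m.newEdge (newIndex b k) (u.map (relabel b k)))) = 1)
    {e : T.ModelEdge} (he : T.edgeAdj (m.oldTet b, u.map (m.oldPerm b)) e) :
    e = (m.oldTet (!b), (u.map p23).map (m.oldPerm (!b))) := by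
  obtain ⟨x, G, σ, hx, hg, rfl⟩ := T.edgeAdj_iff.1 he
  rcases EdgePair.eq_or_eq_of_not_mem (EdgePair.apply_mem_map.not.2 hu)
    (EdgePair.apply_mem_map.not.2 hku) ((m.oldPerm b).injective.ne hk.symm) hx with rfl | rfl
  · have hg' : T.glue (m.sharedFace b) = some (G, σ) := hg
    rw [m.glue_sharedFace] at hg'
    cases hg'
    simp [sharedFace, mul_assoc]
    rfl
  · have hF := m.oldFace_ne_sharedFace (b := b) hk
    have hadj := m.edgeAdj_tr hx hF hg
    rw [m.tr_oldFace hk] at hadj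
    have heq := T'.degree_eq_one_iff.1 h _ hadj
    obtain ⟨b', rfl⟩ := m.eq_oldFace_of_fst_Φ_eq (m.glue_ne_sharedFace hF hg)
      (newIndex_ne_zero hk) (by simpa using congrArg Prod.fst heq)
    obtain rfl | rfl : b' = b ∨ b' = !b := by cases b <;> cases b' <;> simp
    · rw [newIndex_newIndex] at hg
      exact absurd rfl (T.glue_ne _ ((m.oldTet b', m.oldPerm b' k), σ) hg)
    · obtain ⟨-, hk', -⟩ := equator_map_p23 hu hk hku
      have hpartner := m.tr_oldFace (b := !b) hk' (u.map p23)
      rw [newIndex_not_p23, relabel_partner hu hk hku] at hpartner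
      rw [newIndex_not_newIndex] at heq
      exact Prod.ext rfl (m.tr_injective _ (heq.trans hpartner.symm))

theorem equator_edge_degree {b : Bool} {u : EdgePair} {k : Fin 4} (hu : 0 ∉ u.1) (hk : k ≠ 0)
    (hku : k ∉ u.1) :
    T.degree (T.edgeOf (m.oldTet b, u.map (m.oldPerm b))) ≠ 1 ∧
      (T'.degree (T'.edgeOf (m.tr (m.oldTet b, m.oldPerm b k) (u.map (m.oldPerm b)))) = 1 →
        T.degree (T.edgeOf (m.oldTet b, u.map (m.oldPerm b))) = 2) := by
  have hadj : T.edgeAdj (m.oldTet b, u.map (m.oldPerm b))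
      (m.oldTet (!b), (u.map p23).map (m.oldPerm (!b))) := by
    simpa [sharedFace, mul_assoc] using
      T.edgeAdj_of_glue (EdgePair.apply_mem_map.not.2 hu) (m.glue_sharedFace b)
  have hne : (m.oldTet b, u.map (m.oldPerm b)) ≠
      (m.oldTet (!b), (u.map p23).map (m.oldPerm (!b))) :=
    fun h => m.oldTet_not_ne b (congrArg Prod.fst h).symm
  refine ⟨T.degree_ne_one_of_edgeAdj hadj hne, fun h => ?_⟩
  rw [m.tr_oldFace hk] at h
  obtain ⟨hu', hk', hku'⟩ := equator_map_p23 hu hk hku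
  refine T.degree_eq_two_of_edgeAdj hadj hne
    (fun _ he => m.equator_edgeAdj_eq_partner hu hk hku h he) (fun _ he => ?_)
  have h' : T'.degree (T'.edgeOf (m.newEdge (newIndex (!b) (p23 k))
      ((u.map p23).map (relabel (!b) (p23 k))))) = 1 := by
    rwa [newIndex_not_p23, relabel_partner hu hk hku]
  simpa [p23_mul_self] using m.equator_edgeAdj_eq_partner hu' hk' hku' h' he

end Move23

end Paper

open Paper

/-- If a single 2-3 or 3-2 move produces a degree one edge, then that edge had
degree two before the move (or was already a degree one edge); in particular no
single 2-3 or 3-2 move converts an edge of degree greater than two into a degree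
one edge.  (The central edge created by a 2-3 move is never a degree one edge.) -/
theorem degree_one_comes_from_degree_two
    (T T' : Tri) (m : Move23 T T') (e : T.ModelEdge) (f : T'.ModelEdge)
    (hc : m.edgeCorr e f) :
    (T'.degree (T'.edgeOf f) = 1 →
        T.degree (T.edgeOf e) = 1 ∨ T.degree (T.edgeOf e) = 2) ∧
    (T.degree (T.edgeOf e) = 1 →
        T'.degree (T'.edgeOf f) = 1 ∨ T'.degree (T'.edgeOf f) = 2) ∧
    T'.degree (T'.edgeOf m.centralEdge) ≠ 1 := by
  obtain ⟨t, s⟩ := e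
  obtain ⟨i, hi, hiA, hiB, hf₁, hf₂⟩ := hc
  obtain rfl : f = m.tr (t, i) s := Prod.ext hf₁ hf₂
  refine and_assoc.1 ⟨?_, m.centralEdge_degree_ne_one⟩
  rcases m.face_cases (t, i) (Bool.forall_bool.2 ⟨hiA, hiB⟩) with ⟨b, j, hj0, hface⟩ | hout
  · obtain ⟨rfl, rfl⟩ := Prod.mk.inj hface
    obtain ⟨u, rfl⟩ : ∃ u : EdgePair, s = u.map (m.oldPerm b) :=
      ⟨s.map (m.oldPerm b)⁻¹, by simp⟩
    have hj : j ∉ u.1 := EdgePair.apply_mem_map.not.1 hi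
    by_cases hu : 0 ∈ u.1
    · obtain ⟨hf, he⟩ := m.apex_edge_degree hu hj
      exact ⟨fun h => absurd h hf, fun h => Or.inr (he h)⟩
    · obtain ⟨he, hf⟩ := m.equator_edge_degree hu hj0 hj
      exact ⟨fun h => Or.inr (hf h), fun h => absurd h he⟩
  · have h := m.degree_tr_eq_one_iff_of_outside hout s i
    exact ⟨fun h' => Or.inl (h.1 h'), fun h' => Or.inl (h.2 h')⟩
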